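/- Let S be a Boolean semigroup with zero element 0 (a commutative semigroup with zero in which x·x = x for all x). For a nonzero x ∈ S, let N(x) = {z ∈ S : z ≠ 0, z ≠ x, z·x = 0} and S_x = {y ∈ S : y ≠ 0 and N(y) = N(x)}. Then S_x is a sub-semigroup of S and 0 ∉ S_x; in particular, y·z ∈ S_x (so y·z ≠ 0) for all y, z ∈ S_x. -/

import Mathlib

universe u v w
/-- A commutative semigroup with a zero element `0` satisfying `0 * a = 0`. -/
class CommSemigroupWithZero (S : Type u) extends CommSemigroup S, Zero S where
  zero_mul' : ∀ a : S, 0 * a = 0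

/-- The zero-divisor graph of `S`, as a simple graph on all of `S`:
distinct nonzero `x, y` are adjacent iff `x * y = 0`.  (The element `0` and the
non-zero-divisors are isolated vertices, so adjacency, end vertices and cycles
are exactly those of `Γ(S)`.) -/
def zdGraph (S : Type u) [CommSemigroupWithZero S] : SimpleGraph S where
  Adj x y := x ≠ y ∧ x * y = 0 ∧ x ≠ 0 ∧ y ≠ 0
  symm := by
    constructor
    rintro x y ⟨h1, h2, h3, h4⟩
    exact ⟨h1.symm, by rwa [mul_comm], h4, h3⟩
  loopless := ⟨fun x h => h.1 rfl⟩

/-- `x` is a vertex of `Γ(S)`: a nonzero zero-divisor. -/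
def IsVertex (S : Type u) [CommSemigroupWithZero S] (x : S) : Prop :=
  x ≠ 0 ∧ ∃ y : S, y ≠ 0 ∧ x * y = 0

/-- `x` is an end vertex of `Γ(S)`: it has exactly one neighbour. -/
def IsEndVertex (S : Type u) [CommSemigroupWithZero S] (x : S) : Prop :=
  ∃! y : S, (zdGraph S).Adj x y

/-- The neighbourhood of `x` in the zero-divisor graph of `S`. -/
def Nset (S : Type u) [CommSemigroupWithZero S] (x : S) : Set S :=
  {z : S | z ≠ 0 ∧ z ≠ x ∧ z * x = 0}

/-!
In a Boolean semigroup a nonzero `a` is never its own neighbour (`a * a = a ≠ 0`), so `N(a)` is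
the set of nonzero annihilators of `a`, and `N(y) = N(z)` says that `y` and `z` have the same
annihilators. Then `y * z ≠ 0`, since `y` does not annihilate itself; and if `w * (y * z) = 0`,
then `w * y` annihilates `z`, hence `y`, so `w * y = (w * y) * y = 0`.
-/

namespace Nset

variable {S : Type u} [CommSemigroupWithZero S] (hB : ∀ a : S, a * a = a)
include hB

theorem mem_iff_of_idem {a : S} (ha : a ≠ 0) (z : S) : z ∈ Nset S a ↔ z ≠ 0 ∧ z * a = 0 := by
  refine ⟨fun ⟨hz, _, hza⟩ => ⟨hz, hza⟩, fun ⟨hz, hza⟩ => ⟨hz, ?_, hza⟩⟩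
  rintro rfl
  exact ha (by rwa [hB] at hza)

theorem mul_eq_zero_iff_of_eq {y z : S} (hy : y ≠ 0) (hz : z ≠ 0) (h : Nset S y = Nset S z)
    (w : S) : w * y = 0 ↔ w * z = 0 := by
  by_cases hw : w = 0
  · simp only [hw, CommSemigroupWithZero.zero_mul']
  · simpa [hw, mem_iff_of_idem hB hy, mem_iff_of_idem hB hz] using Set.ext_iff.mp h w

theorem mul_ne_zero_of_eq {y z : S} (hy : y ≠ 0) (hz : z ≠ 0) (h : Nset S y = Nset S z) :
    y * z ≠ 0 := by
  rw [Ne, ← mul_eq_zero_iff_of_eq hB hy hz h, hB]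
  exact hy

theorem mul_eq_of_eq {y z : S} (hy : y ≠ 0) (hz : z ≠ 0) (h : Nset S y = Nset S z) :
    Nset S (y * z) = Nset S y := by
  have hann := mul_eq_zero_iff_of_eq hB hy hz h
  ext w
  rw [mem_iff_of_idem hB (mul_ne_zero_of_eq hB hy hz h), mem_iff_of_idem hB hy, ← mul_assoc]
  refine and_congr_right fun _ =>
    ⟨fun hwyz => ?_, fun hwy => by rw [hwy, CommSemigroupWithZero.zero_mul']⟩
  rw [← (hann (w * y)).mpr hwyz, mul_assoc, hB]

end Nset

theorem stmt13 (S : Type u) [CommSemigroupWithZero S] (hB : ∀ x : S, x * x = x)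
    (x : S) :
    (∀ y ∈ {y : S | y ≠ 0 ∧ Nset S y = Nset S x},
      ∀ z ∈ {y : S | y ≠ 0 ∧ Nset S y = Nset S x},
        y * z ∈ {y : S | y ≠ 0 ∧ Nset S y = Nset S x}) ∧
    (0 : S) ∉ {y : S | y ≠ 0 ∧ Nset S y = Nset S x} := by
  refine ⟨?_, fun h => h.1 rfl⟩
  rintro y ⟨hy, hyx⟩ z ⟨hz, hzx⟩
  have hyz : Nset S y = Nset S z := hyx.trans hzx.symm
  exact ⟨Nset.mul_ne_zero_of_eq hB hy hz hyz, (Nset.mul_eq_of_eq hB hy hz hyz).trans hyx⟩
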